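/- Antipode polynomial identity (Lemma 3.2, word form). For every word w = a_1⋯a_{n+1} of length n+1 over A, the alternating sum over all ordered decompositions of w into nonempty factors satisfies Σ_{k=1}^{n+1} (−1)^{k−1} Σ_{(u_1,…,u_k) : each u_i nonempty, u_1 u_2 ⋯ u_k = w} u_1 ⧢ u_2 ⧢ ⋯ ⧢ u_k = (−1)^n a_{n+1} a_n ⋯ a_1, i.e. it equals −α(w) where α is the signed reversal. -/

import Mathlib

/-!
Words over an alphabet `A` are elements of `List A`; the free noncommutative
algebra `ℝ⟨A⟩` is realised as the free `ℝ`-module `List A →₀ ℝ` with the words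
as an `ℝ`-basis (a word `w` is the element `Finsupp.single w 1`, and
concatenation of words is list append).
-/

variable {A : Type*}

/-- The shuffle product of two words, valued in `ℝ⟨A⟩ = List A →₀ ℝ`:
`1 ⧢ w = w ⧢ 1 = w` and
`(a·u) ⧢ (b·v) = a·(u ⧢ (b·v)) + b·((a·u) ⧢ v)`,
where prepending a letter to every word of an element is `Finsupp.mapDomain (List.cons _)`. -/
noncomputable def shuffle : List A → List A → (List A →₀ ℝ)
  | [], v => Finsupp.single v 1
  | u, [] => Finsupp.single u 1
  | a :: u, b :: v =>
      Finsupp.mapDomain (List.cons a) (shuffle u (b :: v)) +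
        Finsupp.mapDomain (List.cons b) (shuffle (a :: u) v)
  termination_by u v => u.length + v.length

/-- The bilinear extension of the shuffle product to all of `ℝ⟨A⟩`. -/
noncomputable def shP (P Q : List A →₀ ℝ) : List A →₀ ℝ :=
  P.sum fun u cu => Q.sum fun v cv => (cu * cv) • shuffle u v

/-- The shuffle product `u₁ ⧢ u₂ ⧢ ⋯ ⧢ u_k` of a finite list of words
(the empty shuffle being the empty word, the unit of the shuffle algebra). -/
noncomputable def shuffleList (L : List (List A)) : List A →₀ ℝ :=
  L.foldr (fun u acc => shP (Finsupp.single u 1) acc) (Finsupp.single [] 1)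

/-- The unsigned reversal `ρ`, with `ρ(a₁⋯aₙ) = aₙ⋯a₁` on words, extended linearly. -/
noncomputable def rho (P : List A →₀ ℝ) : List A →₀ ℝ :=
  Finsupp.mapDomain List.reverse P

/-- The signed reversal `α`, with `α(a₁⋯aₙ) = (-1)ⁿ aₙ⋯a₁` on words, extended linearly. -/
noncomputable def alphaMap (P : List A →₀ ℝ) : List A →₀ ℝ :=
  P.sum fun w c => Finsupp.single w.reverse ((-1 : ℝ) ^ w.length * c)

/-- `D w = Σ_{k=1}^{|w|} (−1)^{k−1} Σ_{u₁⋯u_k = w, each uᵢ nonempty} u₁ ⧢ ⋯ ⧢ u_k`: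
the ordered decompositions of `w` into `k` nonempty factors are parametrised by the
compositions `c` of `|w|` with `c.length = k`, the factors being
`w.splitWrtComposition c`. -/
noncomputable def D (w : List A) : List A →₀ ℝ :=
  ∑ c : Composition w.length,
    ((-1 : ℝ)) ^ (c.length - 1) • shuffleList (w.splitWrtComposition c)

/-!
The left-hand side is `-S(w)`, where `S(v) = Σ_c (-1)^{ℓ(c)} ⧢ (v split along c)` is Takeuchi's
formula for the antipode of the shuffle algebra, so it suffices to show `S(v) = α(v)`.
Splitting off the first factor gives `S(v) = -Σ_{i ≥ 1} v_{≤i} ⧢ S(v_{>i})`, and by induction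
this reduces to `Σ_{i=0}^{|v|} (-1)^i v_{≤i} ⧢ ρ(v_{>i}) = 0` for `v ≠ 1`. Expanding the `i`-th
shuffle according to its last letter, which is either the `i`-th or the `(i+1)`-st letter of
`v`, splits it into two pieces each shared with a neighbouring term, and the alternating sum
telescopes.
-/

open Finset Finsupp

lemma shuffle_nil_left (v : List A) : shuffle [] v = single v 1 := by
  cases v <;> rw [shuffle]

lemma shuffle_nil_right (u : List A) : shuffle u [] = single u 1 := by
  cases u <;> simp [shuffle]

lemma shuffle_cons_cons (a b : A) (u v : List A) :
    shuffle (a :: u) (b :: v) =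
      mapDomain (List.cons a) (shuffle u (b :: v)) +
        mapDomain (List.cons b) (shuffle (a :: u) v) := by
  rw [shuffle]

lemma mapDomain_cons_mapDomain_append (a : A) (x : List A) (P : List A →₀ ℝ) :
    mapDomain (List.cons a) (mapDomain (· ++ x) P) =
      mapDomain (· ++ x) (mapDomain (List.cons a) P) := by
  rw [← mapDomain_comp, ← mapDomain_comp]; rfl

lemma shuffle_append_singleton (u v : List A) (a b : A) :
    shuffle (u ++ [a]) (v ++ [b]) =
      mapDomain (· ++ [a]) (shuffle u (v ++ [b])) +
        mapDomain (· ++ [b]) (shuffle (u ++ [a]) v) := by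
  induction u generalizing v with
  | nil =>
    induction v with
    | nil => simp [shuffle_cons_cons, shuffle_nil_left, shuffle_nil_right, add_comm]
    | cons d v ih =>
      simp only [List.nil_append, List.cons_append] at ih ⊢
      simp only [shuffle_cons_cons, ih, shuffle_nil_left, mapDomain_single, mapDomain_add,
        mapDomain_cons_mapDomain_append, List.cons_append, List.append_assoc, List.nil_append]
      abel
  | cons c u ihu =>
    induction v with
    | nil =>
      have h := ihu []
      simp only [List.nil_append, List.cons_append] at h ⊢
      simp only [shuffle_cons_cons, h, shuffle_nil_right, mapDomain_single, mapDomain_add,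
        mapDomain_cons_mapDomain_append, List.cons_append, List.append_assoc, List.nil_append]
      abel
    | cons d v ihv =>
      have h := ihu (d :: v)
      simp only [List.cons_append] at h ihv ⊢
      simp only [shuffle_cons_cons, h, ihv, mapDomain_add, mapDomain_cons_mapDomain_append]
      abel

/-- The prefix `x` of the second factor is what lets the telescoping run as an induction on `w`. -/
noncomputable def shuffleAltSum (w x : List A) : List A →₀ ℝ :=
  ∑ i ∈ range (w.length + 1), (-1 : ℝ) ^ i • shuffle (w.take i) (x ++ (w.drop i).reverse)

lemma shuffleAltSum_append_singleton_left (u y : List A) (c : A) :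
    shuffleAltSum (u ++ [c]) y =
      shuffleAltSum u (y ++ [c]) + (-1 : ℝ) ^ (u.length + 1) • shuffle (u ++ [c]) y := by
  rw [shuffleAltSum, List.length_append, List.length_singleton, sum_range_succ, shuffleAltSum]
  congr 1
  · refine sum_congr rfl fun i hi => ?_
    have hi : i ≤ u.length := Nat.lt_succ_iff.mp (mem_range.mp hi)
    simp [List.take_append_of_le_length hi, List.drop_append_of_le_length hi]
  · rw [List.take_of_length_le (by simp), List.drop_of_length_le (by simp)]
    simp

lemma shuffleAltSum_append_singleton_right (w x : List A) (d : A) :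
    shuffleAltSum w (x ++ [d]) = (-1 : ℝ) ^ w.length • mapDomain (· ++ [d]) (shuffle w x) := by
  induction w using List.reverseRecOn generalizing x d with
  | nil => simp [shuffleAltSum, shuffle_nil_left]
  | append_singleton u c ih =>
    rw [shuffleAltSum_append_singleton_left, ih, shuffle_append_singleton, List.length_append,
      List.length_singleton, pow_succ]
    module

lemma shuffleAltSum_nil_right {w : List A} (hw : w ≠ []) : shuffleAltSum w [] = 0 := by
  obtain ⟨u, c, rfl⟩ := (List.eq_nil_or_concat' w).resolve_left hw
  rw [shuffleAltSum_append_singleton_left, shuffleAltSum_append_singleton_right, shuffle_nil_right,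
    shuffle_nil_right, mapDomain_single, pow_succ]
  module

lemma shuffleList_cons (u : List A) (L : List (List A)) :
    shuffleList (u :: L) = linearCombination ℝ (shuffle u) (shuffleList L) := by
  rw [shuffleList, List.foldr_cons, ← shuffleList, shP, sum_single_index (by simp),
    linearCombination_apply]
  simp only [one_mul]

namespace Composition

def consSigma (n : ℕ) (p : Σ k : Fin (n + 1), Composition (n - k)) : Composition (n + 1) where
  blocks := (p.1 + 1) :: p.2.blocks
  blocks_pos := by
    rintro i (_ | ⟨_, hi⟩)
    exacts [Nat.succ_pos _, p.2.blocks_pos hi]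
  blocks_sum := by
    rw [List.sum_cons, p.2.blocks_sum]
    omega

lemma consSigma_bijective (n : ℕ) : Function.Bijective (consSigma n) := by
  constructor
  · rintro ⟨k, c⟩ ⟨k', c'⟩ h
    obtain ⟨hk, hc⟩ := List.cons_eq_cons.mp (congrArg blocks h)
    obtain rfl : k = k' := Fin.ext (Nat.succ_injective hk)
    rw [Composition.ext (x := c) hc]
  · rintro ⟨_ | ⟨b, l⟩, hpos, hsum⟩
    · simp at hsum
    · have hb : 0 < b := hpos List.mem_cons_self
      rw [List.sum_cons] at hsum
      refine ⟨⟨⟨b - 1, by omega⟩, ⟨l, fun hi => hpos (List.mem_cons_of_mem _ hi), by simp; omega⟩⟩,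
        Composition.ext ?_⟩
      simp [consSigma]
      omega

lemma sum_eq_sum_consSigma {M : Type*} [AddCommMonoid M] (n : ℕ) (f : Composition (n + 1) → M) :
    ∑ c, f c = ∑ k : Fin (n + 1), ∑ c : Composition (n - k), f (consSigma n ⟨k, c⟩) :=
  (Fintype.sum_bijective _ (consSigma_bijective n) _ _ fun _ => rfl).symm.trans
    (Fintype.sum_sigma _)

@[simp]
lemma length_consSigma (n : ℕ) (k : Fin (n + 1)) (c : Composition (n - k)) :
    (consSigma n ⟨k, c⟩).length = c.length + 1 := by
  simp [consSigma, Composition.length]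

end Composition

lemma List.splitWrtComposition_consSigma {α : Type*} (w : List α) (n : ℕ) (k : Fin (n + 1))
    (c : Composition (n - k)) :
    w.splitWrtComposition (Composition.consSigma n ⟨k, c⟩) =
      w.take (k + 1) :: (w.drop (k + 1)).splitWrtComposition c :=
  splitWrtCompositionAux_cons _ _ _

/-- Takeuchi's formula for the antipode at a word `v` of length `m`. The length is a separate
argument so that the recursion lands in `Composition (n - k)`, not in
`Composition (v.drop k).length`. -/
noncomputable def takeuchiSum (m : ℕ) (v : List A) : List A →₀ ℝ :=
  ∑ c : Composition m, (-1 : ℝ) ^ c.length • shuffleList (v.splitWrtComposition c)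

lemma takeuchiSum_zero (v : List A) : takeuchiSum 0 v = single [] 1 := by
  rw [takeuchiSum, Fintype.sum_eq_single (Composition.ones 0) fun c hc =>
    (hc (Composition.eq_ones_iff_length.mpr (c.length_eq_zero.mpr rfl))).elim]
  simp [shuffleList, List.splitWrtComposition, List.splitWrtCompositionAux]

lemma takeuchiSum_succ (n : ℕ) (v : List A) :
    takeuchiSum (n + 1) v = -∑ k : Fin (n + 1),
      linearCombination ℝ (shuffle (v.take (k + 1))) (takeuchiSum (n - k) (v.drop (k + 1))) := by
  simp only [takeuchiSum, Composition.sum_eq_sum_consSigma, Composition.length_consSigma,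
    List.splitWrtComposition_consSigma, shuffleList_cons, map_sum, map_smul, pow_succ, mul_neg_one,
    neg_smul, sum_neg_distrib]

lemma sum_range_neg_one_pow_smul_shuffle_take_succ {w : List A} (hw : w ≠ []) :
    ∑ k ∈ range w.length, (-1 : ℝ) ^ k • shuffle (w.take (k + 1)) (w.drop (k + 1)).reverse =
      single w.reverse 1 := by
  have h := shuffleAltSum_nil_right hw
  rw [shuffleAltSum, sum_range_succ'] at h
  simp only [pow_succ, mul_neg_one, neg_smul, sum_neg_distrib, List.nil_append, List.take_zero,
    List.drop_zero, shuffle_nil_left, pow_zero, one_smul] at h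
  exact neg_add_eq_zero.mp h

theorem takeuchiSum_eq_neg_one_pow_smul_reverse {m : ℕ} {v : List A} (hv : v.length = m) :
    takeuchiSum m v = (-1 : ℝ) ^ m • single v.reverse 1 := by
  induction m using Nat.strong_induction_on generalizing v with
  | _ m ih =>
  rcases m with _ | n
  · rw [List.length_eq_zero_iff.mp hv, takeuchiSum_zero]
    simp
  have hsign (k : Fin (n + 1)) : (-1 : ℝ) ^ (n - k) = (-1) ^ n * (-1) ^ (k : ℕ) := by
    rw [← pow_sub_mul_pow (-1 : ℝ) (Nat.le_of_lt_succ k.isLt), mul_assoc, ← mul_pow]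
    simp
  calc takeuchiSum (n + 1) v
      = -∑ k : Fin (n + 1), (-1 : ℝ) ^ (n - k) •
          shuffle (v.take (k + 1)) (v.drop (k + 1)).reverse := by
        rw [takeuchiSum_succ]
        congr 1
        refine sum_congr rfl fun k _ => ?_
        rw [ih (n - k) (by omega) (by simp [hv]), map_smul, linearCombination_single, one_smul]
    _ = -((-1 : ℝ) ^ n • ∑ k ∈ range v.length, (-1 : ℝ) ^ k •
          shuffle (v.take (k + 1)) (v.drop (k + 1)).reverse) := by
        simp only [hsign, mul_smul, ← Finset.smul_sum, hv]
        rw [Fin.sum_univ_eq_sum_range (fun k => (-1 : ℝ) ^ k •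
          shuffle (v.take (k + 1)) (v.drop (k + 1)).reverse)]
    _ = (-1 : ℝ) ^ (n + 1) • single v.reverse 1 := by
        rw [sum_range_neg_one_pow_smul_shuffle_take_succ (List.ne_nil_of_length_eq_add_one hv),
          pow_succ]
        module

/-- **Antipode polynomial identity** (Lemma 3.2, word form): for every word
`w = a₁⋯a_{n+1}`, the alternating sum over all ordered decompositions of `w` into
nonempty factors of the shuffle products of the factors equals
`(−1)ⁿ a_{n+1}⋯a₁ = −α(w)`. -/
theorem antipode_polynomial (n : ℕ) (a : Fin (n + 1) → A) :
    ∑ c : Composition (n + 1),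
        ((-1 : ℝ)) ^ (c.length - 1) • shuffleList ((List.ofFn a).splitWrtComposition c) =
      ((-1 : ℝ)) ^ n • Finsupp.single (List.ofFn a).reverse (1 : ℝ) := by
  have hsign (c : Composition (n + 1)) : (-1 : ℝ) ^ (c.length - 1) = -(-1) ^ c.length := by
    rw [← Nat.sub_add_cancel (c.length_pos_of_pos n.succ_pos), pow_succ, Nat.add_sub_cancel]
    ring
  simp only [hsign, neg_smul, sum_neg_distrib]
  rw [← takeuchiSum, takeuchiSum_eq_neg_one_pow_smul_reverse List.length_ofFn, pow_succ]
  module
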